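/- arXiv:1701.09083 — 6 statements merged into one kernel-verified Lean document; each statement's English description precedes it below -/
import Mathlib

section
/- For any two permutations σ, π of {1,...,n}, the Kendall tau distance and the Spearman footrule distance satisfy d_τ(σ,π) ≤ d_S(σ,π) ≤ 2 d_τ(σ,π). -/
/-- Kendall tau distance between two permutations of `Fin n`. -/
def kendall {n : ℕ} (σ π : Equiv.Perm (Fin n)) : ℕ :=
  (Finset.univ.filter (fun p : Fin n × Fin n =>
    p.1 < p.2 ∧ ((σ p.1 < σ p.2 ∧ π p.2 < π p.1) ∨ (σ p.2 < σ p.1 ∧ π p.1 < π p.2)))).card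

/-- Spearman footrule distance `Σ_x |σ(x) - π(x)|`. -/
def spearman {n : ℕ} (σ π : Equiv.Perm (Fin n)) : ℕ :=
  ∑ x : Fin n, ((σ x : ℤ) - (π x : ℤ)).natAbs

/-! Call `(x, y)` discordant when `σ x < σ y` and `π y < π x`. Exactly `σ x` elements precede `x`
under `σ` and `π x` under `π`, so `|σ x - π x|` is at most the number of discordant pairs
containing `x`, and summing over `x` gives `d_S ≤ 2 d_τ`. Conversely, a discordant pair `(x, y)`
has `π x ∈ (π y, σ y]` or `σ y ∈ (σ x, π x)`; charging it to `y` in the first case and to `x` in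
the second, each `z` is charged at most `(σ z - π z)⁺ + (π z - σ z)⁺ = |σ z - π z|` times, which
gives `d_τ ≤ d_S`. -/

open Finset

section
variable {α : Type*} [Fintype α]

theorem card_filter_prod_eq_sum (r : α → α → Prop) [DecidableRel r] :
    #{p : α × α | r p.1 p.2} = ∑ x, #{y | r x y} := by
  simp only [card_filter, Fintype.sum_prod_type]

theorem card_filter_prod_eq_sum_right (r : α → α → Prop) [DecidableRel r] :
    #{p : α × α | r p.1 p.2} = ∑ y, #{x | r x y} := by
  simp only [card_filter, Fintype.sum_prod_type_right]

theorem card_filter_lt_and_or_swap_of_asymm [LinearOrder α] (r : α → α → Prop) [DecidableRel r]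
    (hr : ∀ a b, r a b → ¬ r b a) :
    #{p : α × α | p.1 < p.2 ∧ (r p.1 p.2 ∨ r p.2 p.1)} = #{p : α × α | r p.1 p.2} := by
  have hirrefl : ∀ a, ¬ r a a := fun a h => hr a a h h
  refine card_bij' (fun p _ => if r p.1 p.2 then p else p.swap)
    (fun p _ => if p.1 < p.2 then p else p.swap) ?_ ?_ ?_ ?_ <;>
  rintro ⟨a, b⟩ hp <;> simp only [mem_filter, mem_univ, true_and] at hp ⊢ <;>
  split_ifs <;> grind

variable {n : ℕ}

theorem card_filter_apply_mem (e : α ≃ Fin n) (s : Finset (Fin n)) :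
    #{x | e x ∈ s} = #s := by
  rw [← card_map e.symm.toEmbedding]
  congr 1
  ext x
  simp

theorem card_filter_apply_lt (e : α ≃ Fin n) (a : Fin n) : #{x | e x < a} = a := by
  simpa using card_filter_apply_mem e (Iio a)

def discordantPairs (σ π : α ≃ Fin n) : Finset (α × α) :=
  {p | σ p.1 < σ p.2 ∧ π p.2 < π p.1}

theorem kendall_eq_card_discordantPairs (σ π : Equiv.Perm (Fin n)) :
    kendall σ π = #(discordantPairs σ π) :=
  card_filter_lt_and_or_swap_of_asymm (fun x y => σ x < σ y ∧ π y < π x)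
    fun _ _ h h' => h.1.not_gt h'.1

theorem val_le_val_add_card (σ π : α ≃ Fin n) (x : α) :
    (σ x : ℕ) ≤ π x + #{y | σ y < σ x ∧ π x < π y} := by
  classical
  calc (σ x : ℕ) = #{y | σ y < σ x} := (card_filter_apply_lt σ (σ x)).symm
    _ ≤ #(({y | π y < π x} : Finset α) ∪ ({y | σ y < σ x ∧ π x < π y} : Finset α)) := by
      refine card_le_card fun y hy => ?_
      have hyx : π y ≠ π x := fun h => (mem_filter.1 hy).2.ne (by rw [π.injective h])
      simp only [mem_union, mem_filter, mem_univ, true_and] at hy ⊢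
      rcases hyx.lt_or_gt with h | h
      exacts [Or.inl h, Or.inr ⟨hy, h⟩]
    _ ≤ π x + #{y | σ y < σ x ∧ π x < π y} := by
      grw [card_union_le, card_filter_apply_lt]

theorem natAbs_sub_le_card_add_card (σ π : α ≃ Fin n) (x : α) :
    ((σ x : ℤ) - π x).natAbs ≤
      #{y | σ x < σ y ∧ π y < π x} + #{y | σ y < σ x ∧ π x < π y} := by
  have h₁ := val_le_val_add_card σ π x
  have h₂ := val_le_val_add_card π σ x
  rw [filter_congr fun y _ => and_comm] at h₂
  omega

theorem footrule_le_two_mul_card_discordantPairs (σ π : α ≃ Fin n) :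
    ∑ x, ((σ x : ℤ) - π x).natAbs ≤ 2 * #(discordantPairs σ π) := by
  calc ∑ x, ((σ x : ℤ) - π x).natAbs
      ≤ ∑ x, (#{y | σ x < σ y ∧ π y < π x} + #{y | σ y < σ x ∧ π x < π y}) :=
        sum_le_sum fun x _ => natAbs_sub_le_card_add_card σ π x
    _ = 2 * #(discordantPairs σ π) := by
      rw [sum_add_distrib, two_mul, discordantPairs]
      congr 1
      exacts [(card_filter_prod_eq_sum (fun x y => σ x < σ y ∧ π y < π x)).symm,
        (card_filter_prod_eq_sum_right (fun x y => σ x < σ y ∧ π y < π x)).symm]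

theorem card_discordantPairs_le_footrule (σ π : α ≃ Fin n) :
    #(discordantPairs σ π) ≤ ∑ x, ((σ x : ℤ) - π x).natAbs := by
  classical
  have hcover : discordantPairs σ π ⊆ ({p | π p.1 ∈ Ioc (π p.2) (σ p.2)} : Finset (α × α)) ∪
      ({p | σ p.2 ∈ Ioo (σ p.1) (π p.1)} : Finset (α × α)) := by
    rintro ⟨x, y⟩ hxy
    simp only [discordantPairs, mem_union, mem_filter, mem_univ, true_and, mem_Ioc,
      mem_Ioo] at hxy ⊢
    rcases le_or_gt (π x) (σ y) with h | h
    exacts [Or.inl ⟨hxy.2, h⟩, Or.inr ⟨hxy.1, h⟩]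
  calc #(discordantPairs σ π)
      ≤ #({p | π p.1 ∈ Ioc (π p.2) (σ p.2)} : Finset (α × α)) +
          #({p | σ p.2 ∈ Ioo (σ p.1) (π p.1)} : Finset (α × α)) :=
        (card_le_card hcover).trans (card_union_le _ _)
    _ = ∑ y, ((σ y : ℕ) - π y) + ∑ x, ((π x : ℕ) - σ x - 1) := by
      rw [card_filter_prod_eq_sum_right (fun x y => π x ∈ Ioc (π y) (σ y)),
        card_filter_prod_eq_sum (fun x y => σ y ∈ Ioo (σ x) (π x))]
      simp only [card_filter_apply_mem, Fin.card_Ioc, Fin.card_Ioo]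
    _ ≤ ∑ x, ((σ x : ℤ) - π x).natAbs := by
      rw [← sum_add_distrib]
      exact sum_le_sum fun x _ => by omega

end

/-- Diaconis–Graham: `d_τ(σ,π) ≤ d_S(σ,π) ≤ 2 d_τ(σ,π)`. -/
theorem kendall_le_spearman_le_two_kendall {n : ℕ} (σ π : Equiv.Perm (Fin n)) :
    kendall σ π ≤ spearman σ π ∧ spearman σ π ≤ 2 * kendall σ π := by
  rw [kendall_eq_card_discordantPairs]
  exact ⟨card_discordantPairs_le_footrule σ π, footrule_le_two_mul_card_discordantPairs σ π⟩
end

section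
/- If Lehmer codes c and c' agree on all coordinates, then the corresponding permutations are equal; that is, the inverse Lehmer transform is injective on the codomain [0,0]×[0,1]×...×[0,n-1]. -/
/-- Lehmer code: `lehmer σ x = |{y : y < x, σ y > σ x}|`. -/
def lehmer {n : ℕ} (σ : Equiv.Perm (Fin n)) (x : Fin n) : ℕ :=
  (Finset.univ.filter (fun y : Fin n => y < x ∧ σ x < σ y)).card

lemma lehmer_eq {n : ℕ} (σ : Equiv.Perm (Fin n)) (x : Fin n) :
    lehmer σ x =
      (Finset.univ.filter (fun b : Fin n => σ x < b ∧ ∀ y, x < y → σ y ≠ b)).card := by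
  unfold lehmer
  apply Finset.card_bij (fun y _ => σ y)
  · intro y hy
    simp only [Finset.mem_filter, Finset.mem_univ, true_and] at hy ⊢
    refine ⟨hy.2, fun z hz hzb => ?_⟩
    have : z = y := σ.injective hzb
    subst this
    exact absurd hz (asymm hy.1)
  · intro a ha b hb hab
    exact σ.injective hab
  · intro b hb
    simp only [Finset.mem_filter, Finset.mem_univ, true_and] at hb
    refine ⟨σ.symm b, ?_, by simp⟩
    simp only [Finset.mem_filter, Finset.mem_univ, true_and]
    have hσ : σ (σ.symm b) = b := σ.apply_symm_apply b
    constructor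
    · rcases lt_trichotomy (σ.symm b) x with h1 | h1 | h1
      · exact h1
      · exact absurd (by rw [h1] at hσ; exact hσ) (ne_of_lt hb.1)
      · exact absurd hσ (hb.2 _ h1)
    · rw [hσ]; exact hb.1

/-- If two permutations have Lehmer codes agreeing in all coordinates then they are equal;
equivalently, the inverse Lehmer transform is injective. -/
theorem lehmer_injective {n : ℕ} (σ π : Equiv.Perm (Fin n))
    (h : ∀ x : Fin n, lehmer σ x = lehmer π x) : σ = π := by
  have key : ∀ x : Fin n, (∀ y, x < y → σ y = π y) → σ x = π x := by
    intro x hx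
    set A : Finset (Fin n) := Finset.univ.filter (fun b => ∀ y, x < y → σ y ≠ b) with hA
    have hAeq : (Finset.univ.filter (fun b : Fin n => ∀ y, x < y → π y ≠ b)) = A := by
      apply Finset.filter_congr
      intro b _
      constructor
      · intro hb y hy; rw [hx y hy]; exact hb y hy
      · intro hb y hy; rw [← hx y hy]; exact hb y hy
    have hσ' : lehmer σ x = (A.filter (fun b => σ x < b)).card := by
      rw [lehmer_eq]
      congr 1
      rw [hA, Finset.filter_filter]
      apply Finset.filter_congr
      intro b _; tauto
    have hπ' : lehmer π x = (A.filter (fun b => π x < b)).card := by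
      rw [lehmer_eq]
      rw [← hAeq, Finset.filter_filter]
      congr 1
      apply Finset.filter_congr
      intro b _
      constructor
      · rintro ⟨h1, h2⟩
        exact ⟨fun y hy => h2 y hy, h1⟩
      · rintro ⟨h1, h2⟩
        exact ⟨h2, fun y hy => h1 y hy⟩
    have hσA : σ x ∈ A := by
      simp only [hA, Finset.mem_filter, Finset.mem_univ, true_and]
      intro y hy hc
      exact absurd (σ.injective hc) (ne_of_gt hy)
    have hπA : π x ∈ A := by
      simp only [hA, Finset.mem_filter, Finset.mem_univ, true_and]
      intro y hy hc
      rw [hx y hy] at hc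
      exact absurd (π.injective hc) (ne_of_gt hy)
    have hcard := h x
    rw [hσ', hπ'] at hcard
    rcases lt_trichotomy (σ x) (π x) with hlt | heq | hlt
    · exfalso
      have hss : A.filter (fun b => π x < b) ⊂ A.filter (fun b => σ x < b) := by
        constructor
        · intro b hb
          simp only [Finset.mem_filter] at hb ⊢
          exact ⟨hb.1, hlt.trans hb.2⟩
        · intro hc
          have := hc (Finset.mem_filter.mpr ⟨hπA, hlt⟩)
          simp only [Finset.mem_filter] at this
          exact lt_irrefl _ this.2
      exact absurd hcard (ne_of_gt (Finset.card_lt_card hss))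
    · exact heq
    · exfalso
      have hss : A.filter (fun b => σ x < b) ⊂ A.filter (fun b => π x < b) := by
        constructor
        · intro b hb
          simp only [Finset.mem_filter] at hb ⊢
          exact ⟨hb.1, hlt.trans hb.2⟩
        · intro hc
          have := hc (Finset.mem_filter.mpr ⟨hσA, hlt⟩)
          simp only [Finset.mem_filter] at this
          exact lt_irrefl _ this.2
      exact absurd hcard (ne_of_lt (Finset.card_lt_card hss))
  have all : ∀ m : ℕ, ∀ x : Fin n, n ≤ x.val + m → σ x = π x := by
    intro m
    induction m with
    | zero => intro x hx; exact absurd hx (by have := x.isLt; omega)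
    | succ m ih =>
      intro x hx
      apply key
      intro y hy
      apply ih
      have : x.val < y.val := hy
      omega
  exact Equiv.ext fun x => all n x (by have := x.isLt; omega)
end

section
/- Under the Mallows model MM(σ₀,φ) with 0 < φ < 1 on S_n, for any subset A ⊆ {1,...,n} and u ∈ A, the probability that u is ranked strictly lower than its centroid position within A satisfies P[σ_A(u) > σ_{0,A}(u)] ≤ (φ+φ²+...+φ^{|A|-σ_{0,A}(u)})/(1+φ+...+φ^{|A|-σ_{0,A}(u)}) < φ. -/
/- Probability of the event `E` under the Mallows model `MM(σ₀, φ)`, in which a permutation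
`σ` has probability proportional to `φ ^ d_τ(σ, σ₀)`. -/
open Classical in
noncomputable def mallowsProb {n : ℕ} (σ₀ : Equiv.Perm (Fin n)) (φ : ℝ)
    (E : Equiv.Perm (Fin n) → Prop) : ℝ :=
  (∑ σ : Equiv.Perm (Fin n), if E σ then φ ^ kendall σ σ₀ else 0) /
    (∑ σ : Equiv.Perm (Fin n), φ ^ kendall σ σ₀)

/-- The geometric sum `φ_{a:b} = φ^a + φ^{a+1} + ⋯ + φ^b` (equal to `0` if `a > b`). -/
noncomputable def phiSum (φ : ℝ) (a b : ℕ) : ℝ := ∑ k ∈ Finset.Icc a b, φ ^ k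

/-- One-based position of element `u` in the permutation `σ`. -/
def pos {n : ℕ} (σ : Equiv.Perm (Fin n)) (u : Fin n) : ℕ := (σ u : ℕ) + 1

/-- Projection rank of `x` within the subset `A` under `σ`. -/
def proj {n : ℕ} (σ : Equiv.Perm (Fin n)) (A : Finset (Fin n)) (x : Fin n) : ℕ :=
  (A.filter (fun y => σ y ≤ σ x)).card


/-! Read a permutation as the list of its elements from the top position down. The element
placed first contributes `φ ^ r`, where `r` counts the remaining elements that `σ₀` ranks
lower, and the rest is an arbitrary arrangement of the remaining `m` elements, of total weight
`[m]_φ!` whatever these elements are.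

Let `S` be the elements of `A` that `σ₀` ranks after `u`: the rank of `u` within `A` can only
grow if some element of `S` comes before `u`. Induct on the set still to be arranged. If the next
element is neither `u` nor in `S`, the induction hypothesis applies. Otherwise, an element
`v ∈ S` has at least `r(u) + 1 + r_S(v)` remaining elements ranked lower, so placing an element
of `S` next weighs in total at most `φ_{1:|S|}` times placing `u` next. So "some element of `S`
before `u`" has at most `φ_{1:|S|}` times the weight of its complement, i.e. probability at most
`φ_{1:|S|} / (1 + φ_{1:|S|}) = φ_{1:|S|} / φ_{0:|S|}`. -/

open Finset

theorem phiSum_zero_eq_sum_range (φ : ℝ) (b : ℕ) :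
    phiSum φ 0 b = ∑ k ∈ range (b + 1), φ ^ k := by
  rw [phiSum, ← Finset.Ico_add_one_right_eq_Icc, Finset.range_eq_Ico]

theorem phiSum_one_eq_mul_sum_range (φ : ℝ) (b : ℕ) :
    phiSum φ 1 b = φ * ∑ k ∈ range b, φ ^ k := by
  rw [phiSum, ← Finset.Ico_add_one_right_eq_Icc, Finset.sum_Ico_eq_sum_range, Finset.mul_sum,
    Nat.add_sub_cancel]
  simp only [add_comm 1, pow_succ']

theorem phiSum_zero_eq_one_add (φ : ℝ) (b : ℕ) : phiSum φ 0 b = 1 + phiSum φ 1 b := by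
  rw [phiSum_zero_eq_sum_range, phiSum_one_eq_mul_sum_range, Finset.sum_range_succ',
    Finset.mul_sum, pow_zero, add_comm]
  simp only [pow_succ']

theorem phiSum_one_div_phiSum_zero_lt {φ : ℝ} (hφ : 0 < φ) (b : ℕ) :
    phiSum φ 1 b / phiSum φ 0 b < φ := by
  have hpos : 0 < phiSum φ 0 b := by
    rw [phiSum_zero_eq_one_add]
    exact add_pos_of_pos_of_nonneg one_pos (Finset.sum_nonneg fun k _ => pow_nonneg hφ.le k)
  rw [div_lt_iff₀ hpos, phiSum_one_eq_mul_sum_range, phiSum_zero_eq_sum_range,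
    Finset.sum_range_succ, mul_add]
  exact lt_add_of_pos_right _ (mul_pos hφ (pow_pos hφ b))

theorem div_add_le_div_one_add {a b c : ℝ} (ha : 0 ≤ a) (hb : 0 ≤ b) (hc : 0 ≤ c)
    (h : a ≤ c * b) : a / (a + b) ≤ c / (1 + c) := by
  rcases (add_nonneg ha hb).eq_or_lt with hab | hab
  · rw [← hab, div_zero]
    positivity
  · rw [div_le_div_iff₀ hab (by positivity)]
    nlinarith

namespace Mallows

def qFactorial {R : Type*} [CommSemiring R] (φ : R) (m : ℕ) : R :=
  ∏ k ∈ range m, ∑ j ∈ range (k + 1), φ ^ j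

theorem qFactorial_nonneg {φ : ℝ} (hφ : 0 ≤ φ) (m : ℕ) : 0 ≤ qFactorial φ m :=
  Finset.prod_nonneg fun _ _ => Finset.sum_nonneg fun j _ => pow_nonneg hφ j

section LowerCount

variable {α β : Type*} [LinearOrder β] {κ : α → β}

variable (κ) in
def lowerCount (s : Finset α) (v : α) : ℕ := #{x ∈ s | κ x < κ v}

theorem lowerCount_lt_lowerCount {s : Finset α} {v w : α} (hv : v ∈ s) (h : κ v < κ w) :
    lowerCount κ s v < lowerCount κ s w := by
  refine Finset.card_lt_card ((Finset.ssubset_iff_of_subset fun x hx => ?_).2 ⟨v, ?_, ?_⟩)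
  · simp only [Finset.mem_filter] at hx ⊢
    exact ⟨hx.1, hx.2.trans h⟩
  · simp [hv, h]
  · simp

theorem lowerCount_lt_card {s : Finset α} {v : α} (hv : v ∈ s) : lowerCount κ s v < #s :=
  Finset.card_lt_card (Finset.filter_ssubset.2 ⟨v, hv, lt_irrefl _⟩)

theorem injOn_lowerCount (hκ : Function.Injective κ) (s : Finset α) :
    Set.InjOn (lowerCount κ s) s := by
  intro v hv w hw h
  by_contra hne
  rcases (hκ.ne hne).lt_or_gt with hlt | hlt
  · exact (lowerCount_lt_lowerCount hv hlt).ne h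
  · exact (lowerCount_lt_lowerCount hw hlt).ne' h

theorem image_lowerCount (hκ : Function.Injective κ) (s : Finset α) :
    s.image (lowerCount κ s) = range #s :=
  Finset.eq_of_subset_of_card_le
    (fun _ hk => by
      obtain ⟨v, hv, rfl⟩ := Finset.mem_image.1 hk
      exact Finset.mem_range.2 (lowerCount_lt_card hv))
    (by rw [Finset.card_range, Finset.card_image_of_injOn (injOn_lowerCount hκ s)])

theorem sum_pow_lowerCount {R : Type*} [CommSemiring R] (hκ : Function.Injective κ)
    (s : Finset α) (φ : R) :
    ∑ v ∈ s, φ ^ lowerCount κ s v = ∑ k ∈ range #s, φ ^ k := by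
  rw [← image_lowerCount hκ s, Finset.sum_image (injOn_lowerCount hκ s)]

theorem lowerCount_add_le_lowerCount [DecidableEq α] {s S : Finset α} {u v : α} (hu : u ∈ s)
    (hS : S ⊆ s) (hSu : ∀ y ∈ S, κ u < κ y) (hv : v ∈ S) :
    lowerCount κ s u + 1 + lowerCount κ S v ≤ lowerCount κ s v := by
  have huv : κ u < κ v := hSu v hv
  have hdisj : Disjoint {x ∈ s | κ x < κ u} {x ∈ S | κ x < κ v} := by
    rw [Finset.disjoint_left]
    intro x hx hx'
    simp only [Finset.mem_filter] at hx hx'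
    exact (hx.2.trans (hSu x hx'.1)).false
  have hnotMem : u ∉ {x ∈ s | κ x < κ u} ∪ {x ∈ S | κ x < κ v} := by
    simp only [Finset.mem_union, Finset.mem_filter, lt_irrefl, and_false, false_or, not_and]
    exact fun huS => absurd (hSu u huS) (lt_irrefl _)
  have hsub : insert u ({x ∈ s | κ x < κ u} ∪ {x ∈ S | κ x < κ v}) ⊆
      {x ∈ s | κ x < κ v} := by
    intro x hx
    simp only [Finset.mem_insert, Finset.mem_union, Finset.mem_filter] at hx ⊢
    rcases hx with rfl | hx | hx
    · exact ⟨hu, huv⟩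
    · exact ⟨hx.1, hx.2.trans huv⟩
    · exact ⟨hS hx.1, hx.2⟩
  have := Finset.card_le_card hsub
  rw [Finset.card_insert_of_notMem hnotMem, Finset.card_union_of_disjoint hdisj] at this
  unfold lowerCount
  omega

theorem sum_pow_lowerCount_le [DecidableEq α] (hκ : Function.Injective κ) {φ : ℝ}
    (hφ0 : 0 ≤ φ) (hφ1 : φ ≤ 1) {s S : Finset α} {u : α} (hu : u ∈ s) (hS : S ⊆ s)
    (hSu : ∀ y ∈ S, κ u < κ y) :
    ∑ v ∈ S, φ ^ lowerCount κ s v ≤ phiSum φ 1 #S * φ ^ lowerCount κ s u :=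
  calc ∑ v ∈ S, φ ^ lowerCount κ s v
      ≤ ∑ v ∈ S, φ ^ (lowerCount κ s u + 1 + lowerCount κ S v) :=
        Finset.sum_le_sum fun v hv =>
          pow_le_pow_of_le_one hφ0 hφ1 (lowerCount_add_le_lowerCount hu hS hSu hv)
    _ = phiSum φ 1 #S * φ ^ lowerCount κ s u := by
        simp only [pow_add, pow_one, ← Finset.mul_sum, sum_pow_lowerCount hκ,
          phiSum_one_eq_mul_sum_range]
        ring

end LowerCount

section Inversions

variable {α β : Type*} [LinearOrder β] (κ : α → β)

def inversions : List α → ℕ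
  | [] => 0
  | v :: l => l.countP (fun x => κ x < κ v) + inversions l

theorem countP_ofFn {m : ℕ} (f : Fin m → α) (p : α → Prop) [DecidablePred p] :
    (List.ofFn f).countP (fun x => decide (p x)) = #{i | p (f i)} := by
  rw [← Multiset.coe_countP, ← Fin.univ_val_map, Multiset.countP_map, ← Finset.filter_val,
    Finset.card_val]

theorem inversions_ofFn {m : ℕ} (f : Fin m → α) :
    inversions κ (List.ofFn f) =
      #{q : Fin m × Fin m | q.1 < q.2 ∧ κ (f q.2) < κ (f q.1)} := by
  induction m with
  | zero => simp [inversions]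
  | succ m ih =>
    rw [List.ofFn_succ, inversions, ih, countP_ofFn]
    simp only [Finset.card_filter, Fintype.sum_prod_type, Fin.sum_univ_succ, Fin.succ_pos,
      Fin.succ_lt_succ_iff, Fin.not_lt_zero, false_and, if_false, true_and, zero_add]

end Inversions

section Arrangements

variable {α : Type*} [DecidableEq α]

noncomputable def arrangements (s : Finset α) : Finset (List α) := s.toList.permutations.toFinset

theorem mem_arrangements {s : Finset α} {l : List α} :
    l ∈ arrangements s ↔ (l : Multiset α) = s.val := by
  rw [arrangements, List.mem_toFinset, List.mem_permutations, ← Multiset.coe_eq_coe,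
    Finset.coe_toList]

theorem nodup_of_mem_arrangements {s : Finset α} {l : List α} (h : l ∈ arrangements s) :
    l.Nodup := by
  rw [← Multiset.coe_nodup, mem_arrangements.1 h]; exact s.nodup

theorem cons_mem_arrangements {s : Finset α} {v : α} {l : List α} :
    v :: l ∈ arrangements s ↔ v ∈ s ∧ l ∈ arrangements (s.erase v) := by
  simp only [mem_arrangements, Finset.erase_val, ← Multiset.cons_coe]
  constructor
  · intro h
    have hv : v ∈ s := by rw [← Finset.mem_val, ← h]; exact Multiset.mem_cons_self _ _
    refine ⟨hv, ?_⟩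
    rw [← h, Multiset.erase_cons_head]
  · rintro ⟨hv, h⟩
    rw [h, Multiset.cons_erase hv]

theorem sum_arrangements {M : Type*} [AddCommMonoid M] {s : Finset α} (hs : s.Nonempty)
    (g : List α → M) :
    ∑ l ∈ arrangements s, g l =
      ∑ v ∈ s, ∑ l ∈ arrangements (s.erase v), g (v :: l) := by
  rw [Finset.sum_sigma']
  symm
  refine Finset.sum_bij (fun p _ => p.1 :: p.2) (fun p hp => ?_) (fun p _ q _ h => ?_)
    (fun l hl => ?_) (fun _ _ => rfl)
  · rw [Finset.mem_sigma] at hp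
    exact cons_mem_arrangements.2 hp
  · simp only [List.cons.injEq] at h
    exact Sigma.ext h.1 (heq_of_eq h.2)
  · cases l with
    | nil =>
      exact absurd (Finset.val_eq_zero.1 (mem_arrangements.1 hl).symm) hs.ne_empty
    | cons v t => exact ⟨⟨v, t⟩, Finset.mem_sigma.2 (cons_mem_arrangements.1 hl), rfl⟩

theorem arrangements_empty : arrangements (∅ : Finset α) = {[]} := by
  ext l
  rw [mem_arrangements, Finset.mem_singleton, Finset.empty_val, Multiset.coe_eq_zero]

theorem ofFn_symm_mem_arrangements {n : ℕ} (σ : Equiv.Perm (Fin n)) :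
    List.ofFn σ.symm ∈ arrangements univ := by
  rw [mem_arrangements, ← Fin.univ_val_map, Multiset.map_univ_val_equiv]

theorem exists_ofFn_symm_eq {n : ℕ} {l : List (Fin n)} (hl : l ∈ arrangements univ) :
    ∃ σ : Equiv.Perm (Fin n), List.ofFn σ.symm = l := by
  have hlen : l.length = n := by
    rw [← Multiset.coe_card, mem_arrangements.1 hl, Finset.card_val, Finset.card_univ,
      Fintype.card_fin]
  let e : Fin n → Fin n := fun i => l[i.1]
  have he : Function.Bijective e := Finite.injective_iff_bijective.1 fun i j h =>
    Fin.ext ((nodup_of_mem_arrangements hl).getElem_inj_iff.1 h)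
  refine ⟨(Equiv.ofBijective e he).symm, List.ext_getElem (by simp [hlen]) fun i _ _ => ?_⟩
  simp [e]

theorem sum_perm_eq_sum_arrangements {M : Type*} [AddCommMonoid M] {n : ℕ}
    (g : List (Fin n) → M) :
    ∑ σ : Equiv.Perm (Fin n), g (List.ofFn σ.symm) = ∑ l ∈ arrangements univ, g l :=
  Finset.sum_bij (fun σ _ => List.ofFn σ.symm) (fun σ _ => ofFn_symm_mem_arrangements σ)
    (fun σ _ τ _ h =>
      Equiv.symm_bijective.injective (Equiv.ext (congrFun (List.ofFn_injective h))))
    (fun l hl => by simpa using exists_ofFn_symm_eq hl) (fun _ _ => rfl)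
variable {β : Type*} [LinearOrder β] (κ : α → β)

theorem inversions_cons_of_mem_arrangements {s : Finset α} {v : α} {l : List α}
    (hl : l ∈ arrangements (s.erase v)) :
    inversions κ (v :: l) = lowerCount κ s v + inversions κ l := by
  rw [inversions, lowerCount, ← Multiset.coe_countP, mem_arrangements.1 hl,
    Multiset.countP_eq_card_filter, ← Finset.filter_val, Finset.card_val, Finset.filter_erase,
    Finset.erase_eq_of_notMem (by simp)]

variable {R : Type*} [CommSemiring R] (φ : R)

noncomputable def arrWeight (s : Finset α) (p : List α → Prop) [DecidablePred p] : R :=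
  ∑ l ∈ arrangements s with p l, φ ^ inversions κ l

variable {κ φ}

theorem arrWeight_congr {s : Finset α} {p q : List α → Prop} [DecidablePred p]
    [DecidablePred q] (h : ∀ l, p l ↔ q l) : arrWeight κ φ s p = arrWeight κ φ s q := by
  rw [arrWeight, arrWeight, Finset.filter_congr fun l _ => h l]

theorem arrWeight_false (s : Finset α) : arrWeight κ φ s (fun _ => False) = 0 := by
  simp [arrWeight]

theorem arrWeight_add_arrWeight_not (s : Finset α) (p : List α → Prop) [DecidablePred p] :
    arrWeight κ φ s p + arrWeight κ φ s (fun l => ¬ p l) =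
      arrWeight κ φ s (fun _ => True) := by
  simp only [arrWeight, Finset.sum_filter_add_sum_filter_not, Finset.filter_true]

theorem arrWeight_eq_sum {s : Finset α} (hs : s.Nonempty) (p : List α → Prop)
    [DecidablePred p] :
    arrWeight κ φ s p =
      ∑ v ∈ s, φ ^ lowerCount κ s v * arrWeight κ φ (s.erase v) (fun l => p (v :: l)) := by
  rw [arrWeight, Finset.sum_filter, sum_arrangements hs]
  refine Finset.sum_congr rfl fun v _ => ?_
  rw [arrWeight, Finset.sum_filter, Finset.mul_sum]
  refine Finset.sum_congr rfl fun l hl => ?_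
  rw [inversions_cons_of_mem_arrangements κ hl, pow_add, mul_ite, mul_zero]

theorem arrWeight_true (hκ : Function.Injective κ) (s : Finset α) :
    arrWeight κ φ s (fun _ => True) = qFactorial φ #s := by
  induction hn : #s generalizing s with
  | zero =>
    simp [Finset.card_eq_zero.1 hn, arrWeight, arrangements_empty, inversions, qFactorial]
  | succ n ih =>
    have hs : s.Nonempty := Finset.card_pos.1 (by omega)
    rw [arrWeight_eq_sum hs, qFactorial, Finset.prod_range_succ, ← hn,
      ← sum_pow_lowerCount hκ s, Finset.mul_sum]
    refine Finset.sum_congr rfl fun v hv => ?_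
    rw [ih _ (by rw [Finset.card_erase_of_mem hv, hn, Nat.add_sub_cancel]), mul_comm,
      qFactorial]

theorem arrWeight_nonneg {φ : ℝ} (hφ : 0 ≤ φ) (s : Finset α) (p : List α → Prop)
    [DecidablePred p] : 0 ≤ arrWeight κ φ s p :=
  Finset.sum_nonneg fun _ _ => pow_nonneg hφ _

end Arrangements

section SomeBefore

variable {α : Type*} [DecidableEq α]

def someBefore (S : Finset α) (u : α) (l : List α) : Prop := ∃ y ∈ S, l.idxOf y < l.idxOf u

instance (S : Finset α) (u : α) : DecidablePred (someBefore S u) :=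
  fun l => inferInstanceAs (Decidable (∃ y ∈ S, l.idxOf y < l.idxOf u))

variable {S : Finset α} {u v : α} {l : List α}

theorem someBefore_cons_of_mem (hv : v ∈ S) (hvu : v ≠ u) : someBefore S u (v :: l) :=
  ⟨v, hv, by rw [List.idxOf_cons_self, List.idxOf_cons_ne _ hvu]; exact Nat.succ_pos _⟩

theorem not_someBefore_cons_self : ¬ someBefore S u (u :: l) := by
  rintro ⟨y, -, h⟩
  rw [List.idxOf_cons_self] at h
  exact Nat.not_lt_zero _ h

theorem someBefore_cons_iff (hvS : v ∉ S) (hvu : v ≠ u) :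
    someBefore S u (v :: l) ↔ someBefore S u l := by
  refine exists_congr fun y => and_congr_right fun hy => ?_
  rw [List.idxOf_cons_ne _ (ne_of_mem_of_not_mem hy hvS).symm, List.idxOf_cons_ne _ hvu,
    Nat.succ_lt_succ_iff]

theorem idxOf_ofFn_symm {n : ℕ} (σ : Equiv.Perm (Fin n)) (x : Fin n) :
    (List.ofFn σ.symm).idxOf x = σ x := by
  simpa using (List.nodup_ofFn.2 σ.symm.injective).idxOf_getElem (σ x) (by simp)

theorem someBefore_ofFn_symm_iff {n : ℕ} (σ : Equiv.Perm (Fin n)) (S : Finset (Fin n))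
    (u : Fin n) : someBefore S u (List.ofFn σ.symm) ↔ ∃ y ∈ S, σ y < σ u := by
  simp only [someBefore, idxOf_ofFn_symm, Fin.val_fin_lt]

end SomeBefore

section FirstPlaced

variable {α β R : Type*} [DecidableEq α] [LinearOrder β] [CommSemiring R] {κ : α → β}
  {φ : R} {S s : Finset α} {u : α}

theorem sum_eq_sum_sdiff_insert_add {M : Type*} [AddCommMonoid M] (f : α → M) (hu : u ∈ s)
    (hS : S ⊆ s) (huS : u ∉ S) :
    ∑ v ∈ s, f v = ∑ v ∈ s \ insert u S, f v + (f u + ∑ v ∈ S, f v) := by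
  rw [← Finset.sum_insert huS, Finset.sum_sdiff (Finset.insert_subset hu hS)]

theorem arrWeight_someBefore_eq (hκ : Function.Injective κ) (hu : u ∈ s) (hS : S ⊆ s)
    (huS : u ∉ S) :
    arrWeight κ φ s (someBefore S u) =
      ∑ v ∈ s \ insert u S,
          φ ^ lowerCount κ s v * arrWeight κ φ (s.erase v) (someBefore S u) +
        (∑ v ∈ S, φ ^ lowerCount κ s v) * qFactorial φ (#s - 1) := by
  rw [arrWeight_eq_sum ⟨u, hu⟩, sum_eq_sum_sdiff_insert_add _ hu hS huS,
    arrWeight_congr fun l => iff_false_intro not_someBefore_cons_self, arrWeight_false,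
    mul_zero, zero_add, Finset.sum_mul]
  congr 1
  · refine Finset.sum_congr rfl fun v hv => ?_
    obtain ⟨hvu, hvS⟩ := not_or.1 (Finset.mem_insert.not.1 (Finset.mem_sdiff.1 hv).2)
    rw [arrWeight_congr fun l => someBefore_cons_iff hvS hvu]
  · refine Finset.sum_congr rfl fun v hv => ?_
    rw [arrWeight_congr fun l => iff_true_intro
      (someBefore_cons_of_mem hv (ne_of_mem_of_not_mem hv huS)), arrWeight_true hκ,
      Finset.card_erase_of_mem (hS hv)]

theorem arrWeight_not_someBefore_eq (hκ : Function.Injective κ) (hu : u ∈ s) (hS : S ⊆ s)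
    (huS : u ∉ S) :
    arrWeight κ φ s (fun l => ¬ someBefore S u l) =
      ∑ v ∈ s \ insert u S,
          φ ^ lowerCount κ s v * arrWeight κ φ (s.erase v) (fun l => ¬ someBefore S u l) +
        φ ^ lowerCount κ s u * qFactorial φ (#s - 1) := by
  rw [arrWeight_eq_sum ⟨u, hu⟩, sum_eq_sum_sdiff_insert_add _ hu hS huS,
    arrWeight_congr fun l => iff_true_intro not_someBefore_cons_self, arrWeight_true hκ,
    Finset.card_erase_of_mem hu]
  congr 1
  · refine Finset.sum_congr rfl fun v hv => ?_
    obtain ⟨hvu, hvS⟩ := not_or.1 (Finset.mem_insert.not.1 (Finset.mem_sdiff.1 hv).2)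
    rw [arrWeight_congr fun l => not_congr (someBefore_cons_iff hvS hvu)]
  · convert add_zero _ using 2
    refine Finset.sum_eq_zero fun v hv => ?_
    rw [arrWeight_congr fun l => iff_false_intro (not_not.2
      (someBefore_cons_of_mem hv (ne_of_mem_of_not_mem hv huS))), arrWeight_false, mul_zero]

end FirstPlaced

variable {α β : Type*} [DecidableEq α] [LinearOrder β] {κ : α → β}

theorem arrWeight_someBefore_le (hκ : Function.Injective κ) {φ : ℝ} (hφ0 : 0 ≤ φ)
    (hφ1 : φ ≤ 1) {S : Finset α} {u : α} (hSu : ∀ y ∈ S, κ u < κ y) {s : Finset α}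
    (hu : u ∈ s) (hS : S ⊆ s) :
    arrWeight κ φ s (someBefore S u) ≤
      phiSum φ 1 #S * arrWeight κ φ s (fun l => ¬ someBefore S u l) := by
  induction s using Finset.strongInduction with
  | H s ih =>
    have huS : u ∉ S := fun h => (hSu u h).false
    rw [arrWeight_someBefore_eq hκ hu hS huS, arrWeight_not_someBefore_eq hκ hu hS huS, mul_add,
      Finset.mul_sum]
    refine add_le_add (Finset.sum_le_sum fun v hv => ?_) ?_
    · obtain ⟨hvs, hvuS⟩ := Finset.mem_sdiff.1 hv
      obtain ⟨hvu, hvS⟩ := not_or.1 (Finset.mem_insert.not.1 hvuS)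
      have hS' : S ⊆ s.erase v := fun y hy =>
        Finset.mem_erase.2 ⟨ne_of_mem_of_not_mem hy hvS, hS hy⟩
      rw [mul_left_comm]
      exact mul_le_mul_of_nonneg_left
        (ih _ (Finset.erase_ssubset hvs) (Finset.mem_erase.2 ⟨Ne.symm hvu, hu⟩) hS')
        (pow_nonneg hφ0 _)
    · rw [← mul_assoc]
      exact mul_le_mul_of_nonneg_right (sum_pow_lowerCount_le hκ hφ0 hφ1 hu hS hSu)
        (qFactorial_nonneg hφ0 _)

end Mallows

open Mallows

theorem kendall_eq_inversions {n : ℕ} (σ σ₀ : Equiv.Perm (Fin n)) :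
    kendall σ σ₀ = inversions σ₀ (List.ofFn σ.symm) := by
  rw [inversions_ofFn]
  refine Finset.card_nbij'
    (fun p => if σ p.1 < σ p.2 then (σ p.1, σ p.2) else (σ p.2, σ p.1))
    (fun q => if σ.symm q.1 < σ.symm q.2 then (σ.symm q.1, σ.symm q.2)
      else (σ.symm q.2, σ.symm q.1)) ?_ ?_ ?_ ?_ <;>
  · intro p hp
    simp only [Finset.coe_filter, Finset.mem_univ, true_and] at hp ⊢
    split_ifs <;> grind

theorem sum_ite_pow_kendall {n : ℕ} (σ₀ : Equiv.Perm (Fin n)) (φ : ℝ)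
    (p : List (Fin n) → Prop) [DecidablePred p] :
    ∑ σ : Equiv.Perm (Fin n), (if p (List.ofFn σ.symm) then φ ^ kendall σ σ₀ else 0) =
      arrWeight σ₀ φ univ p := by
  simp only [arrWeight, Finset.sum_filter, ← sum_perm_eq_sum_arrangements, kendall_eq_inversions]

theorem mallowsProb_mono {n : ℕ} (σ₀ : Equiv.Perm (Fin n)) {φ : ℝ} (hφ : 0 ≤ φ)
    {E F : Equiv.Perm (Fin n) → Prop} (h : ∀ σ, E σ → F σ) :
    mallowsProb σ₀ φ E ≤ mallowsProb σ₀ φ F := by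
  refine div_le_div_of_nonneg_right (Finset.sum_le_sum fun σ _ => ?_)
    (Finset.sum_nonneg fun _ _ => pow_nonneg hφ _)
  split_ifs with hE hF
  · exact le_rfl
  · exact absurd (h σ hE) hF
  · exact pow_nonneg hφ _
  · exact le_rfl

theorem mallowsProb_exists_lt_le {n : ℕ} (σ₀ : Equiv.Perm (Fin n)) {φ : ℝ} (hφ0 : 0 ≤ φ)
    (hφ1 : φ ≤ 1) {S : Finset (Fin n)} {u : Fin n} (hSu : ∀ y ∈ S, σ₀ u < σ₀ y) :
    mallowsProb σ₀ φ (fun σ => ∃ y ∈ S, σ y < σ u) ≤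
      phiSum φ 1 #S / phiSum φ 0 #S := by
  have hprob : mallowsProb σ₀ φ (fun σ => ∃ y ∈ S, σ y < σ u) =
      arrWeight σ₀ φ univ (someBefore S u) /
        (arrWeight σ₀ φ univ (someBefore S u) +
          arrWeight σ₀ φ univ (fun l => ¬ someBefore S u l)) := by
    rw [mallowsProb, arrWeight_add_arrWeight_not, ← sum_ite_pow_kendall,
      ← sum_ite_pow_kendall]
    simp only [if_true, someBefore_ofFn_symm_iff]
    congr! 3
  rw [hprob, phiSum_zero_eq_one_add]
  exact div_add_le_div_one_add (arrWeight_nonneg hφ0 _ _) (arrWeight_nonneg hφ0 _ _)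
    (Finset.sum_nonneg fun _ _ => pow_nonneg hφ0 _)
    (arrWeight_someBefore_le σ₀.injective hφ0 hφ1 hSu (mem_univ u) (subset_univ S))

theorem exists_lt_of_proj_lt {n : ℕ} {σ σ₀ : Equiv.Perm (Fin n)} {A : Finset (Fin n)}
    {u : Fin n} (h : proj σ₀ A u < proj σ A u) :
    ∃ y ∈ {y ∈ A | σ₀ u < σ₀ y}, σ y < σ u := by
  by_contra! hcon
  refine h.not_ge (Finset.card_le_card fun y hy => ?_)
  simp only [Finset.mem_filter] at hy hcon ⊢
  refine ⟨hy.1, le_of_not_gt fun hlt => hlt.ne' (congrArg σ₀ (σ.injective ?_))⟩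
  exact le_antisymm hy.2 (hcon y ⟨hy.1, hlt⟩)

theorem card_filter_lt_eq_card_sub_proj {n : ℕ} (σ₀ : Equiv.Perm (Fin n)) (A : Finset (Fin n))
    (u : Fin n) : #{y ∈ A | σ₀ u < σ₀ y} = #A - proj σ₀ A u := by
  rw [proj, ← Finset.card_filter_add_card_filter_not (s := A) (fun y => σ₀ y ≤ σ₀ u)]
  simp only [not_le, Nat.add_sub_cancel_left]

theorem mallows_proj_above_general {n : ℕ} (σ₀ : Equiv.Perm (Fin n)) (φ : ℝ)
    (hφ0 : 0 < φ) (hφ1 : φ < 1) (A : Finset (Fin n)) (u : Fin n) :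
    mallowsProb σ₀ φ (fun σ => proj σ A u > proj σ₀ A u) ≤
      phiSum φ 1 (A.card - proj σ₀ A u) / phiSum φ 0 (A.card - proj σ₀ A u) ∧
    phiSum φ 1 (A.card - proj σ₀ A u) / phiSum φ 0 (A.card - proj σ₀ A u) < φ := by
  rw [← card_filter_lt_eq_card_sub_proj]
  refine ⟨?_, phiSum_one_div_phiSum_zero_lt hφ0 _⟩
  calc mallowsProb σ₀ φ (fun σ => proj σ A u > proj σ₀ A u)
      ≤ mallowsProb σ₀ φ (fun σ => ∃ y ∈ {y ∈ A | σ₀ u < σ₀ y}, σ y < σ u) :=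
        mallowsProb_mono σ₀ hφ0.le fun _ => exists_lt_of_proj_lt
    _ ≤ _ := mallowsProb_exists_lt_le σ₀ hφ0.le hφ1.le fun _ hy => (Finset.mem_filter.1 hy).2

/-- Lemma 4.5, part 1): under `MM(σ₀,φ)` with `0 < φ < 1`, for `A ⊆ [n]` and `u ∈ A`,
`P[σ_A(u) > σ_{0,A}(u)] ≤ φ_{1:|A|-σ_{0,A}(u)} / φ_{0:|A|-σ_{0,A}(u)} < φ`. -/
theorem mallows_proj_above {n : ℕ} (σ₀ : Equiv.Perm (Fin n)) (φ : ℝ)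
    (hφ0 : 0 < φ) (hφ1 : φ < 1) (A : Finset (Fin n)) (u : Fin n) (hu : u ∈ A) :
    mallowsProb σ₀ φ (fun σ => proj σ A u > proj σ₀ A u) ≤
      phiSum φ 1 (A.card - proj σ₀ A u) / phiSum φ 0 (A.card - proj σ₀ A u) ∧
    phiSum φ 1 (A.card - proj σ₀ A u) / phiSum φ 0 (A.card - proj σ₀ A u) < φ :=
  mallows_proj_above_general σ₀ φ hφ0 hφ1 A u
end

section
/- Let 0 < φ < 1 satisfy φ + φ² < 1 + φⁿ, and write φ_{a:b} = φ^a + φ^{a+1} + ... + φ^b. Then for every natural number ℓ ≥ 0, (1 + φ^ℓ · φ_{1:n-ℓ-2}) / (φ^{-1} + φ^{2ℓ} · φ_{2:n-ℓ-1}) ≤ φ_{1:n-1} / (1 + φ_{3:n}). -/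
lemma phiSum_nonneg {φ : ℝ} (hφ : 0 ≤ φ) (a b : ℕ) : 0 ≤ phiSum φ a b :=
  Finset.sum_nonneg fun k _ => pow_nonneg hφ k

lemma phiSum_of_lt (φ : ℝ) {a b : ℕ} (h : b < a) : phiSum φ a b = 0 := by
  rw [phiSum, Finset.Icc_eq_empty_of_lt h, Finset.sum_empty]

lemma phiSum_mul_one_sub (φ : ℝ) {a b : ℕ} (h : a ≤ b + 1) :
    phiSum φ a b * (1 - φ) = φ ^ a - φ ^ (b + 1) := by
  rw [phiSum, ← Finset.Ico_add_one_right_eq_Icc]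
  exact geom_sum_Ico_mul_neg φ h

-- With `u = φ^ℓ` and `p = φ^(n-1)`, this is the theorem with both sides multiplied by their
-- denominators and by `(1 - φ)² φ`.
lemma closedForm_cross_mul_le {φ u p : ℝ} (hφ0 : 0 ≤ φ) (hφ1 : φ ≤ 1) (hp : 0 ≤ p)
    (hcond : φ + φ ^ 2 < 1 + p * φ) (hu : u = 1 ∨ u ≤ φ ∧ p ≤ φ ^ 2) :
    (1 - φ + u * φ - p) * (1 - φ + φ ^ 3 - p * φ ^ 2) * φ ≤
      (φ - p * φ) * (1 - φ + u ^ 2 * φ ^ 3 - u * p * φ ^ 2) := by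
  rcases hu with rfl | ⟨hu, hpφ⟩
  · exact le_of_eq (by ring)
  have hfactor : (φ - p * φ) * (1 - φ + u ^ 2 * φ ^ 3 - u * p * φ ^ 2) -
      (1 - φ + u * φ - p) * (1 - φ + φ ^ 3 - p * φ ^ 2) * φ =
      φ ^ 2 * (1 - u) *
        ((1 + p * φ - φ - φ ^ 2) + p * φ * (φ ^ 2 - p) + (1 - p) * φ ^ 2 * (φ - u)) := by
    ring
  have hφ2 : φ ^ 2 ≤ 1 := pow_le_one₀ hφ0 hφ1
  have hbracket :
      0 ≤ (1 + p * φ - φ - φ ^ 2) + p * φ * (φ ^ 2 - p) + (1 - p) * φ ^ 2 * (φ - u) := by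
    have := mul_nonneg (mul_nonneg hp hφ0) (sub_nonneg.2 hpφ)
    have := mul_nonneg (mul_nonneg (sub_nonneg.2 (hpφ.trans hφ2)) (sq_nonneg φ)) (sub_nonneg.2 hu)
    linarith
  rw [← sub_nonneg, hfactor]
  exact mul_nonneg (mul_nonneg (sq_nonneg φ) (sub_nonneg.2 (hu.trans hφ1))) hbracket

lemma ratio_bound_add_two {φ : ℝ} (hφ0 : 0 < φ) (hφ1 : φ < 1) (ℓ m : ℕ)
    (hcond : φ + φ ^ 2 < 1 + φ ^ (ℓ + m + 2)) :
    (1 + φ ^ ℓ * phiSum φ 1 m) / (φ⁻¹ + φ ^ (2 * ℓ) * phiSum φ 2 (m + 1)) ≤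
      phiSum φ 1 (ℓ + m + 1) / (1 + phiSum φ 3 (ℓ + m + 2)) := by
  have hden_left : 0 < φ⁻¹ + φ ^ (2 * ℓ) * phiSum φ 2 (m + 1) :=
    add_pos_of_pos_of_nonneg (inv_pos.2 hφ0)
      (mul_nonneg (by positivity) (phiSum_nonneg hφ0.le _ _))
  have hden_right : 0 < 1 + phiSum φ 3 (ℓ + m + 2) := by
    linarith [phiSum_nonneg hφ0.le 3 (ℓ + m + 2)]
  rw [div_le_div_iff₀ hden_left hden_right, mul_comm 2 ℓ, pow_mul]
  have hu : φ ^ ℓ = 1 ∨ φ ^ ℓ ≤ φ ∧ φ ^ (ℓ + m + 1) ≤ φ ^ 2 := by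
    rcases Nat.eq_zero_or_pos ℓ with rfl | hℓ
    · exact Or.inl (pow_zero φ)
    · exact Or.inr ⟨pow_le_of_le_one hφ0.le hφ1.le hℓ.ne',
        pow_le_pow_of_le_one hφ0.le hφ1.le (by omega)⟩
  have e1 : (1 - φ) * (1 + φ ^ ℓ * phiSum φ 1 m) = 1 - φ + φ ^ ℓ * φ - φ ^ (ℓ + m + 1) := by
    linear_combination φ ^ ℓ * phiSum_mul_one_sub φ (a := 1) (b := m) (by omega)
  have e2 : (1 - φ) * (1 + phiSum φ 3 (ℓ + m + 2)) =
      1 - φ + φ ^ 3 - φ ^ (ℓ + m + 1) * φ ^ 2 := by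
    linear_combination phiSum_mul_one_sub φ (a := 3) (b := ℓ + m + 2) (by omega)
  have e3 : (1 - φ) * phiSum φ 1 (ℓ + m + 1) = φ - φ ^ (ℓ + m + 1) * φ := by
    linear_combination phiSum_mul_one_sub φ (a := 1) (b := ℓ + m + 1) (by omega)
  have e4 : (1 - φ) * (φ * (φ⁻¹ + (φ ^ ℓ) ^ 2 * phiSum φ 2 (m + 1))) =
      1 - φ + (φ ^ ℓ) ^ 2 * φ ^ 3 - φ ^ ℓ * φ ^ (ℓ + m + 1) * φ ^ 2 := by
    linear_combination (1 - φ) * mul_inv_cancel₀ hφ0.ne' +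
      φ * (φ ^ ℓ) ^ 2 * phiSum_mul_one_sub φ (a := 2) (b := m + 1) (by omega)
  have hkey :
      (1 - φ) * (1 + φ ^ ℓ * phiSum φ 1 m) * ((1 - φ) * (1 + phiSum φ 3 (ℓ + m + 2))) * φ ≤
      (1 - φ) * phiSum φ 1 (ℓ + m + 1) *
        ((1 - φ) * (φ * (φ⁻¹ + (φ ^ ℓ) ^ 2 * phiSum φ 2 (m + 1)))) := by
    rw [e1, e2, e3, e4]
    exact closedForm_cross_mul_le hφ0.le hφ1.le (by positivity) (by linear_combination hcond) hu
  refine le_of_mul_le_mul_left ?_ (mul_pos (pow_pos (sub_pos.2 hφ1) 2) hφ0)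
  linear_combination hkey

lemma mul_one_add_phiSum_le {φ : ℝ} (hφ0 : 0 ≤ φ) (hφ1 : φ < 1) {n : ℕ} (hn : 2 ≤ n) :
    φ * (1 + phiSum φ 3 n) ≤ phiSum φ 1 (n - 1) := by
  obtain ⟨k, rfl⟩ : ∃ k, n = k + 2 := ⟨n - 2, by omega⟩
  rw [show k + 2 - 1 = k + 1 by omega]
  refine le_of_mul_le_mul_right ?_ (sub_pos.2 hφ1)
  have hφk : φ ^ k ≤ 1 := pow_le_one₀ hφ0 hφ1.le
  have hφ2 : φ ^ 2 ≤ 1 := pow_le_one₀ hφ0 hφ1.le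
  have hdiff : 0 ≤ φ ^ 2 * (1 - φ ^ 2) * (1 - φ ^ k) :=
    mul_nonneg (mul_nonneg (sq_nonneg φ) (sub_nonneg.2 hφ2)) (sub_nonneg.2 hφk)
  linear_combination hdiff + φ * phiSum_mul_one_sub φ (a := 3) (b := k + 2) (by omega) -
    phiSum_mul_one_sub φ (a := 1) (b := k + 1) (by omega)

/-- Lemma B.3: if `0 < φ < 1` and `φ + φ² < 1 + φⁿ`, then for all `ℓ ≥ 0`,
`(1 + φ^ℓ φ_{1:n-ℓ-2}) / (φ⁻¹ + φ^{2ℓ} φ_{2:n-ℓ-1}) ≤ φ_{1:n-1} / (1 + φ_{3:n})`. -/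
theorem ratio_bound (n : ℕ) (hn : 2 ≤ n) (φ : ℝ) (hφ0 : 0 < φ) (hφ1 : φ < 1)
    (hcond : φ + φ ^ 2 < 1 + φ ^ n) (ℓ : ℕ) :
    (1 + φ ^ ℓ * phiSum φ 1 (n - ℓ - 2)) / (φ⁻¹ + φ ^ (2 * ℓ) * phiSum φ 2 (n - ℓ - 1)) ≤
      phiSum φ 1 (n - 1) / (1 + phiSum φ 3 n) := by
  rcases le_or_gt (ℓ + 2) n with hℓ | hℓ
  · obtain ⟨m, rfl⟩ : ∃ m, n = ℓ + m + 2 := ⟨n - ℓ - 2, by omega⟩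
    rw [show ℓ + m + 2 - ℓ - 2 = m by omega, show ℓ + m + 2 - ℓ - 1 = m + 1 by omega,
      show ℓ + m + 2 - 1 = ℓ + m + 1 by omega]
    exact ratio_bound_add_two hφ0 hφ1 ℓ m hcond
  · rw [phiSum_of_lt φ (a := 1) (by omega), phiSum_of_lt φ (a := 2) (by omega), mul_zero,
      mul_zero, add_zero, add_zero, one_div, inv_inv,
      le_div_iff₀ (by linarith [phiSum_nonneg hφ0.le 3 n])]
    exact mul_one_add_phiSum_le hφ0.le hφ1 hn
end

section
/- If 0 < φ < 1 satisfies φ + φ^{1/2} < 1, then for every integer j ≥ 1, (1 + φ^{j/2}/(j+1)) / (1 + φ^{j/2} + φ^j/(1-φ^{1/2})) ≥ 1 - φ^{1/2}/2 - φ/2, and the right-hand side exceeds 1/2. -/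
/-!
Write `s = √φ` and `u = s ^ j ≤ s`. The target constant factors as `(1 - s) (1 + s / 2)`, and
`(1 - s)` times the denominator is `(1 - s) (1 + u) + u ^ 2`. For `j = 1` this is `1`, and the
inequality becomes the equality `1 + s / 2 = 1 + s / 2`. For `j ≥ 2` we have `u ≤ s ^ 2`, and
already `(1 + s / 2) ((1 - s) (1 + s ^ 2) + s ^ 4) = 1 - s / 2 ((1 - s) + s ^ 2 (1 - s - s ^ 2))`,
which is at most `1` because `s + s ^ 2 < 1`.
-/

lemma one_sub_half_sub_half_sq_mul_eq {s : ℝ} (hs : s ≠ 1) (u : ℝ) :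
    (1 - s / 2 - s ^ 2 / 2) * (1 + u + u ^ 2 / (1 - s)) =
      (1 + s / 2) * ((1 - s) * (1 + u) + u ^ 2) := by
  have : 1 - s ≠ 0 := sub_ne_zero.2 hs.symm
  field_simp
  ring

lemma one_add_half_mul_le_one {s u : ℝ} (hs : 0 ≤ s) (hu : 0 ≤ u) (hus : u ≤ s ^ 2)
    (hcond : s ^ 2 + s < 1) :
    (1 + s / 2) * ((1 - s) * (1 + u) + u ^ 2) ≤ 1 := by
  have hmono : (1 - s) * (1 + u) + u ^ 2 ≤ (1 - s) * (1 + s ^ 2) + (s ^ 2) ^ 2 := by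
    nlinarith
  calc (1 + s / 2) * ((1 - s) * (1 + u) + u ^ 2)
      ≤ (1 + s / 2) * ((1 - s) * (1 + s ^ 2) + (s ^ 2) ^ 2) := by gcongr
    _ = 1 - s / 2 * ((1 - s) + s ^ 2 * (1 - (s ^ 2 + s))) := by ring
    _ ≤ 1 := by
      have : 0 ≤ s ^ 2 * (1 - (s ^ 2 + s)) := mul_nonneg (sq_nonneg s) (by linarith)
      have : 0 ≤ s / 2 * ((1 - s) + s ^ 2 * (1 - (s ^ 2 + s))) :=
        mul_nonneg (by positivity) (by nlinarith)
      linarith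

lemma one_sub_half_sub_half_sq_le_ratio {s : ℝ} (hs : 0 < s) (hcond : s ^ 2 + s < 1)
    {j : ℕ} (hj : 1 ≤ j) :
    1 - s / 2 - s ^ 2 / 2 ≤ (1 + s ^ j / (j + 1)) / (1 + s ^ j + (s ^ 2) ^ j / (1 - s)) := by
  have hs1 : s < 1 := by nlinarith [sq_nonneg s]
  have hden : 0 < 1 + s ^ j + (s ^ 2) ^ j / (1 - s) := by
    have : 0 ≤ (s ^ 2) ^ j / (1 - s) := div_nonneg (by positivity) (by linarith)
    positivity
  rw [le_div_iff₀ hden, pow_right_comm,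
    one_sub_half_sub_half_sq_mul_eq hs1.ne]
  obtain rfl | hj2 := hj.eq_or_lt
  · exact le_of_eq (by push_cast; ring)
  · have hsj : s ^ j ≤ s ^ 2 := pow_le_pow_of_le_one hs.le hs1.le hj2
    have := one_add_half_mul_le_one hs.le (by positivity) hsj hcond
    have : 0 ≤ s ^ j / (j + 1) := by positivity
    linarith

theorem vote_ratio_bound_general (φ : ℝ) (hφ0 : 0 < φ)
    (hcond : φ + Real.sqrt φ < 1) (j : ℕ) (hj : 1 ≤ j) :
    (1 + Real.sqrt φ ^ j / (j + 1)) /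
        (1 + Real.sqrt φ ^ j + φ ^ j / (1 - Real.sqrt φ)) ≥
      1 - Real.sqrt φ / 2 - φ / 2 ∧
    (1 : ℝ) / 2 < 1 - Real.sqrt φ / 2 - φ / 2 := by
  obtain ⟨s, hs, rfl⟩ : ∃ s, 0 < s ∧ s ^ 2 = φ :=
    ⟨√φ, Real.sqrt_pos.2 hφ0, Real.sq_sqrt hφ0.le⟩
  rw [Real.sqrt_sq hs.le] at hcond ⊢
  exact ⟨one_sub_half_sub_half_sq_le_ratio hs hcond hj, by linarith⟩

/-- The inequality used in the proof of Lemma 4.7: if `0 < φ < 1` and `φ + φ^{1/2} < 1`, then for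
every integer `j ≥ 1`,
`(1 + φ^{j/2}/(j+1)) / (1 + φ^{j/2} + φ^j/(1-φ^{1/2})) ≥ 1 - φ^{1/2}/2 - φ/2 > 1/2`. -/
theorem vote_ratio_bound (φ : ℝ) (hφ0 : 0 < φ) (hφ1 : φ < 1)
    (hcond : φ + Real.sqrt φ < 1) (j : ℕ) (hj : 1 ≤ j) :
    (1 + Real.sqrt φ ^ j / (j + 1)) /
        (1 + Real.sqrt φ ^ j + φ ^ j / (1 - Real.sqrt φ)) ≥
      1 - Real.sqrt φ / 2 - φ / 2 ∧
    (1 : ℝ) / 2 < 1 - Real.sqrt φ / 2 - φ / 2 :=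
  vote_ratio_bound_general φ hφ0 hcond j hj
end

section
/- For a partial ranking σ of {1,...,n} (a surjection onto {1,...,t} allowing ties), define c_σ(x) = |{y < x : σ(y) > σ(x)}| and c'_σ(x) = |{y < x : σ(y) ≥ σ(x)}|. Then the pair (c_σ, c'_σ) uniquely determines σ; moreover c'_σ(x) = c_{σ'}(x) + IN_x − 1 and c_σ(x) = c_{σ'}(x), where σ' is the permutation obtained from σ by breaking ties within each bucket in increasing order of element labels, and IN_x = |{y ≤ x : σ(y) = σ(x)}|. -/
/-- `code f x = |{y < x : f y > f x}|`, the Lehmer-type code of a (possibly tied) ranking. -/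
def code {n : ℕ} (f : Fin n → ℕ) (x : Fin n) : ℕ :=
  (Finset.univ.filter (fun y : Fin n => y < x ∧ f x < f y)).card

/-- `code' f x = |{y < x : f y ≥ f x}|`, the second Lehmer-type code of a partial ranking. -/
def code' {n : ℕ} (f : Fin n → ℕ) (x : Fin n) : ℕ :=
  (Finset.univ.filter (fun y : Fin n => y < x ∧ f x ≤ f y)).card

/-- `IN σ x = |{y ≤ x : σ y = σ x}|`, the number of elements up to `x` tied with `x`. -/
def IN {n : ℕ} (f : Fin n → ℕ) (x : Fin n) : ℕ :=
  (Finset.univ.filter (fun y : Fin n => y ≤ x ∧ f y = f x)).card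

/-- A partial ranking of `{1,…,n}` with `t` buckets: a surjection onto `{1,…,t}` (ties allowed). -/
def IsPartialRanking {n : ℕ} (t : ℕ) (f : Fin n → ℕ) : Prop :=
  (∀ x, f x ∈ Finset.Icc 1 t) ∧ ∀ j ∈ Finset.Icc 1 t, ∃ x, f x = j

open Finset

lemma tied_aux {n : ℕ} (f : Fin n → ℕ) (x : Fin n) :
    code' f x = code f x + (univ.filter (fun y : Fin n => y < x ∧ f y = f x)).card := by
  unfold code code'
  have h : (univ.filter (fun y : Fin n => y < x ∧ f x ≤ f y))
      = (univ.filter (fun y : Fin n => y < x ∧ f x < f y))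
        ∪ (univ.filter (fun y : Fin n => y < x ∧ f y = f x)) := by
    ext y
    simp only [mem_filter, mem_univ, true_and, mem_union]
    constructor
    · rintro ⟨h1, h2⟩
      rcases lt_or_eq_of_le h2 with h | h
      · exact Or.inl ⟨h1, h⟩
      · exact Or.inr ⟨h1, h.symm⟩
    · rintro (⟨h1, h2⟩ | ⟨h1, h2⟩)
      · exact ⟨h1, le_of_lt h2⟩
      · exact ⟨h1, le_of_eq h2.symm⟩
  rw [h, card_union_of_disjoint]
  rw [disjoint_left]
  intro a ha hb
  simp only [mem_filter, mem_univ, true_and] at ha hb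
  omega

lemma IN_aux {n : ℕ} (f : Fin n → ℕ) (x : Fin n) :
    IN f x = (univ.filter (fun y : Fin n => y < x ∧ f y = f x)).card + 1 := by
  unfold IN
  have h : (univ.filter (fun y : Fin n => y ≤ x ∧ f y = f x))
      = insert x (univ.filter (fun y : Fin n => y < x ∧ f y = f x)) := by
    ext y
    simp only [mem_filter, mem_univ, true_and, mem_insert]
    constructor
    · rintro ⟨h1, h2⟩
      rcases lt_or_eq_of_le h1 with h | h
      · exact Or.inr ⟨h, h2⟩
      · exact Or.inl h
    · rintro (h | ⟨h1, h2⟩)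
      · subst h; exact ⟨le_refl _, rfl⟩
      · exact ⟨le_of_lt h1, h2⟩
  rw [h, card_insert_of_notMem]
  simp

lemma upward_eq {n : ℕ} (g : Fin n → ℕ) (D A B : Finset (Fin n))
    (hA : A ⊆ D) (hB : B ⊆ D)
    (hAu : ∀ a ∈ A, ∀ b ∈ D, g a ≤ g b → b ∈ A)
    (hBu : ∀ a ∈ B, ∀ b ∈ D, g a ≤ g b → b ∈ B)
    (hcard : A.card = B.card) : A = B := by
  by_cases h : A ⊆ B
  · exact eq_of_subset_of_card_le h hcard.ge
  · obtain ⟨a, haA, haB⟩ := not_subset.mp h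
    have ha : a ∈ A ∧ a ∉ B := ⟨haA, haB⟩
    have hBA : B ⊆ A := by
      intro b hb
      rcases le_total (g b) (g a) with h | h
      · exact absurd (hBu b hb a (hA ha.1) (by omega)) ha.2
      · exact hAu a ha.1 b (hB hb) h
    exact (eq_of_subset_of_card_le hBA hcard.le).symm

-- value of a partial ranking determined by the "weakly below" set
lemma value_eq {n : ℕ} (t : ℕ) (f : Fin n → ℕ) (hf : IsPartialRanking t f) (x : Fin n) :
    ((univ.filter (fun y : Fin n => f y ≤ f x)).image f).card = f x := by
  have himg : (univ.filter (fun y : Fin n => f y ≤ f x)).image f = Finset.Icc 1 (f x) := by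
    ext j
    simp only [mem_image, mem_filter, mem_univ, true_and, Finset.mem_Icc]
    constructor
    · rintro ⟨y, hy, rfl⟩
      have := hf.1 y
      rw [Finset.mem_Icc] at this
      exact ⟨this.1, hy⟩
    · rintro ⟨h1, h2⟩
      have hx := hf.1 x
      rw [Finset.mem_Icc] at hx
      obtain ⟨y, hy⟩ := hf.2 j (Finset.mem_Icc.mpr ⟨h1, le_trans h2 hx.2⟩)
      exact ⟨y, by omega, hy⟩
  rw [himg, Nat.card_Icc]
  omega

-- number of f-classes on S equals number of g-classes, given same equivalence
lemma image_card_eq {n : ℕ} (f g : Fin n → ℕ) (S : Finset (Fin n))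
    (h : ∀ y ∈ S, ∀ z ∈ S, (f y = f z ↔ g y = g z)) :
    (S.image f).card = (S.image g).card := by
  set R := S.filter (fun y => ∀ z ∈ S, f z = f y → y ≤ z) with hR
  have hRS : R ⊆ S := filter_subset _ _
  have key : ∀ (h' : Fin n → ℕ), (∀ y ∈ S, ∀ z ∈ S, (f y = f z ↔ h' y = h' z)) →
      (S.image h').card = R.card := by
    intro h' hh
    have himg : S.image h' = R.image h' := by
      apply Subset.antisymm
      · intro j hj
        rw [mem_image] at hj
        obtain ⟨y, hy, rfl⟩ := hj
        set T := S.filter (fun z => f z = f y) with hT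
        have hTne : T.Nonempty := ⟨y, by simp [hT, hy]⟩
        set m := T.min' hTne with hm
        have hmT : m ∈ T := T.min'_mem hTne
        rw [hT, mem_filter] at hmT
        have hmR : m ∈ R := by
          rw [hR, mem_filter]
          refine ⟨hmT.1, fun z hz hfz => ?_⟩
          exact T.min'_le z (by rw [hT, mem_filter]; exact ⟨hz, by rw [hfz, hmT.2]⟩)
        refine mem_image.mpr ⟨m, hmR, ?_⟩
        exact ((hh m hmT.1 y hy).mp hmT.2).symm ▸ rfl
      · exact image_subset_image hRS
    rw [himg, card_image_of_injOn]
    intro y hy z hz hyz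
    rw [Finset.mem_coe, hR, mem_filter] at hy hz
    have h1 : f z = f y := (hh z hz.1 y hy.1).mpr (by rw [hyz])
    exact le_antisymm (hy.2 z hz.1 h1) (hz.2 y hy.1 h1.symm)
  rw [key f (fun y hy z hz => Iff.rfl), key g h]

lemma order_determined {n : ℕ} (σ τ : Fin n → ℕ)
    (hc : ∀ x, code σ x = code τ x) (hc' : ∀ x, code' σ x = code' τ x) :
    ∀ y z : Fin n, σ y ≤ σ z ↔ τ y ≤ τ z := by
  suffices H : ∀ k : ℕ, ∀ y z : Fin n, (y:ℕ) < k → (z:ℕ) < k → (σ y ≤ σ z ↔ τ y ≤ τ z) by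
    exact fun y z => H n y z y.isLt z.isLt
  intro k
  induction k with
  | zero => intro y z hy hz; omega
  | succ k ih =>
    have hnew : ∀ x : Fin n, (x:ℕ) = k → ∀ y : Fin n, y < x →
        ((σ x < σ y ↔ τ x < τ y) ∧ (σ x ≤ σ y ↔ τ x ≤ τ y)) := by
      intro x hx
      have ihx : ∀ y z : Fin n, y < x → z < x → (σ y ≤ σ z ↔ τ y ≤ τ z) := by
        intro y z hy hz
        rw [Fin.lt_def] at hy hz
        exact ih y z (by omega) (by omega)
      set D := univ.filter (fun y : Fin n => y < x) with hD
      set A := univ.filter (fun y : Fin n => y < x ∧ σ x < σ y) with hA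
      set A' := univ.filter (fun y : Fin n => y < x ∧ τ x < τ y) with hA'
      set B := univ.filter (fun y : Fin n => y < x ∧ σ x ≤ σ y) with hB
      set B' := univ.filter (fun y : Fin n => y < x ∧ τ x ≤ τ y) with hB'
      have hsubA : A ⊆ D := by
        intro a ha; rw [hA, mem_filter] at ha; rw [hD, mem_filter]; exact ⟨ha.1, ha.2.1⟩
      have hsubA' : A' ⊆ D := by
        intro a ha; rw [hA', mem_filter] at ha; rw [hD, mem_filter]; exact ⟨ha.1, ha.2.1⟩
      have hsubB : B ⊆ D := by
        intro a ha; rw [hB, mem_filter] at ha; rw [hD, mem_filter]; exact ⟨ha.1, ha.2.1⟩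
      have hsubB' : B' ⊆ D := by
        intro a ha; rw [hB', mem_filter] at ha; rw [hD, mem_filter]; exact ⟨ha.1, ha.2.1⟩
      have hupA : ∀ a ∈ A, ∀ b ∈ D, σ a ≤ σ b → b ∈ A := by
        intro a ha b hb hab
        rw [hA, mem_filter] at ha ⊢
        rw [hD, mem_filter] at hb
        exact ⟨mem_univ _, hb.2, lt_of_lt_of_le ha.2.2 hab⟩
      have hupA' : ∀ a ∈ A', ∀ b ∈ D, σ a ≤ σ b → b ∈ A' := by
        intro a ha b hb hab
        rw [hA', mem_filter] at ha ⊢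
        rw [hD, mem_filter] at hb
        exact ⟨mem_univ _, hb.2, lt_of_lt_of_le ha.2.2 ((ihx a b ha.2.1 hb.2).mp hab)⟩
      have hupB : ∀ a ∈ B, ∀ b ∈ D, σ a ≤ σ b → b ∈ B := by
        intro a ha b hb hab
        rw [hB, mem_filter] at ha ⊢
        rw [hD, mem_filter] at hb
        exact ⟨mem_univ _, hb.2, le_trans ha.2.2 hab⟩
      have hupB' : ∀ a ∈ B', ∀ b ∈ D, σ a ≤ σ b → b ∈ B' := by
        intro a ha b hb hab
        rw [hB', mem_filter] at ha ⊢
        rw [hD, mem_filter] at hb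
        exact ⟨mem_univ _, hb.2, le_trans ha.2.2 ((ihx a b ha.2.1 hb.2).mp hab)⟩
      have hAA' : A = A' := upward_eq σ D A A' hsubA hsubA' hupA hupA' (hc x)
      have hBB' : B = B' := upward_eq σ D B B' hsubB hsubB' hupB hupB' (hc' x)
      intro y hy
      constructor
      · constructor
        · intro h
          have : y ∈ A := by rw [hA, mem_filter]; exact ⟨mem_univ _, hy, h⟩
          rw [hAA', hA', mem_filter] at this
          exact this.2.2
        · intro h
          have : y ∈ A' := by rw [hA', mem_filter]; exact ⟨mem_univ _, hy, h⟩
          rw [← hAA', hA, mem_filter] at this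
          exact this.2.2
      · constructor
        · intro h
          have : y ∈ B := by rw [hB, mem_filter]; exact ⟨mem_univ _, hy, h⟩
          rw [hBB', hB', mem_filter] at this
          exact this.2.2
        · intro h
          have : y ∈ B' := by rw [hB', mem_filter]; exact ⟨mem_univ _, hy, h⟩
          rw [← hBB', hB, mem_filter] at this
          exact this.2.2
    intro y z hy hz
    by_cases hy' : (y:ℕ) < k
    · by_cases hz' : (z:ℕ) < k
      · exact ih y z hy' hz'
      · have hzk : (z:ℕ) = k := by omega
        have h1 := (hnew z hzk y (by rw [Fin.lt_def]; omega)).1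
        constructor
        · intro h
          by_contra hc2
          exact absurd h (not_le.mpr (h1.mpr (not_le.mp hc2)))
        · intro h
          by_contra hc2
          exact absurd h (not_le.mpr (h1.mp (not_le.mp hc2)))
    · have hyk : (y:ℕ) = k := by omega
      by_cases hz' : (z:ℕ) < k
      · exact (hnew y hyk z (by rw [Fin.lt_def]; omega)).2
      · have : y = z := Fin.ext (by omega)
        subst this
        simp


/-- For a partial ranking `σ`, the pair of codes `(c_σ, c'_σ)` uniquely determines `σ`.
Moreover, if `σ'` is the permutation obtained from `σ` by breaking ties within each bucket in
increasing order of labels, then `c_σ(x) = c_{σ'}(x)` and `c'_σ(x) = c_{σ'}(x) + IN_x − 1`,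
where `IN_x = |{y ≤ x : σ(y) = σ(x)}|`. -/
theorem partial_ranking_lehmer {n : ℕ} (t : ℕ) (σ : Fin n → ℕ)
    (hσ : IsPartialRanking t σ) :
    (∀ s : ℕ, ∀ τ : Fin n → ℕ, IsPartialRanking s τ →
      (∀ x, code σ x = code τ x) → (∀ x, code' σ x = code' τ x) → σ = τ) ∧
    (∀ σ' : Equiv.Perm (Fin n),
      (∀ x y : Fin n, (σ x < σ y ∨ (σ x = σ y ∧ x < y)) → σ' x < σ' y) →
      ∀ x : Fin n,
        code σ x = code (fun z => (σ' z : ℕ)) x ∧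
        code' σ x = code (fun z => (σ' z : ℕ)) x + IN σ x - 1) := by
  constructor
  · intro s τ hτ hc hc'
    have hord := order_determined σ τ hc hc'
    have heqv : ∀ y z, σ y = σ z ↔ τ y = τ z := by
      intro y z
      constructor <;> intro h
      · exact le_antisymm ((hord y z).mp h.le) ((hord z y).mp h.ge)
      · exact le_antisymm ((hord y z).mpr h.le) ((hord z y).mpr h.ge)
    funext x
    have hS : univ.filter (fun y : Fin n => σ y ≤ σ x)
        = univ.filter (fun y : Fin n => τ y ≤ τ x) := by
      ext y
      simp only [mem_filter, mem_univ, true_and]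
      exact hord y x
    rw [← value_eq t σ hσ x, ← value_eq s τ hτ x, ← hS]
    exact image_card_eq σ τ _ (fun y _ z _ => heqv y z)
  · intro σ' hmono x
    have hcode : code σ x = code (fun z => (σ' z : ℕ)) x := by
      unfold code
      congr 1
      ext y
      simp only [mem_filter, mem_univ, true_and]
      constructor
      · rintro ⟨h1, h2⟩
        exact ⟨h1, Fin.lt_def.mp (hmono x y (Or.inl h2))⟩
      · rintro ⟨h1, h2⟩
        refine ⟨h1, ?_⟩
        rcases lt_trichotomy (σ x) (σ y) with h | h | h
        · exact h
        · exact absurd (Fin.lt_def.mp (hmono y x (Or.inr ⟨h.symm, h1⟩))) (by omega)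
        · exact absurd (Fin.lt_def.mp (hmono y x (Or.inl h))) (by omega)
    refine ⟨hcode, ?_⟩
    have t1 := tied_aux σ x
    have t2 := IN_aux σ x
    omega
end
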